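/- In the Kirchheim–Magnani counterexample, where the identity map from (H(1), d) to (H(1), ρ) is not metrically differentiable anywhere, the triple (H(1), ρ, δ̄) is not a dilatation structure (axiom A4 fails). -/
import Mathlib


/-- The Heisenberg group H(1) as a set: ℝ² × ℝ. -/
abbrev H : Type := (ℝ × ℝ) × ℝ

/-- Euclidean norm on ℝ². -/
noncomputable def enorm2 (x : ℝ × ℝ) : ℝ := Real.sqrt (x.1 ^ 2 + x.2 ^ 2)

/-- Canonical symplectic form on ℝ². -/
def omega2 (x y : ℝ × ℝ) : ℝ := x.1 * y.2 - x.2 * y.1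

/-- Heisenberg group operation. -/
def Hmul (p q : H) : H :=
  ((p.1.1 + q.1.1, p.1.2 + q.1.2), p.2 + q.2 + 2 * omega2 p.1 q.1)

/-- Heisenberg group inverse. -/
def Hinv (p : H) : H := ((-p.1.1, -p.1.2), -p.2)

/-- Neutral element. -/
def He : H := ((0, 0), 0)

/-- The gauge d₀(x,x̄) = max {‖x‖, √|x̄|}. -/
noncomputable def d0 (p : H) : ℝ := max (enorm2 p.1) (Real.sqrt |p.2|)
/-- The function G(t) = k(t) + t², whose inverse is g. -/
def Ginv (k : ℝ → ℝ) (t : ℝ) : ℝ := k t + t ^ 2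

/-- The gauge ρ₀(x,x̄) = max {‖x‖, g(|x̄|)}. -/
noncomputable def rho0 (g : ℝ → ℝ) (p : H) : ℝ := max (enorm2 p.1) (g |p.2|)

/-- The dilatations δ̄_ε(x,x̄) = (εx, sgn(x̄)·g⁻¹(ε·g(|x̄|))). -/
noncomputable def bdil (k g : ℝ → ℝ) (ε : ℝ) (p : H) : H :=
  ((ε * p.1.1, ε * p.1.2), Real.sign p.2 * Ginv k (ε * g |p.2|))

/-- The usual anisotropic dilations δ_ε(x,x̄) = (εx, ε²x̄). -/
def hdil (ε : ℝ) (p : H) : H := ((ε * p.1.1, ε * p.1.2), ε ^ 2 * p.2)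


lemma hgroup (x w : H) : Hmul (Hinv x) (Hmul x w) = w := by
  simp only [Hmul, Hinv, omega2]
  ext <;> simp <;> ring

lemma enorm2_nonneg (x : ℝ × ℝ) : 0 ≤ enorm2 x := Real.sqrt_nonneg _

lemma enorm2_smul (ε a b : ℝ) (hε : 0 ≤ ε) : enorm2 (ε * a, ε * b) = ε * enorm2 (a, b) := by
  simp only [enorm2]
  rw [show (ε*a)^2 + (ε*b)^2 = ε^2*(a^2+b^2) by ring, Real.sqrt_mul (sq_nonneg ε),
    Real.sqrt_sq hε]

lemma enorm2_triangle (x y : ℝ × ℝ) :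
    enorm2 (x.1 + y.1, x.2 + y.2) ≤ enorm2 x + enorm2 y := by
  simp only [enorm2]
  have h1 : x.1 * y.1 + x.2 * y.2 ≤ Real.sqrt (x.1^2 + x.2^2) * Real.sqrt (y.1^2 + y.2^2) := by
    have : x.1 * y.1 + x.2 * y.2 ≤ |x.1 * y.1 + x.2 * y.2| := le_abs_self _
    have h2 : |x.1 * y.1 + x.2 * y.2| = Real.sqrt ((x.1 * y.1 + x.2 * y.2)^2) :=
      (Real.sqrt_sq_eq_abs _).symm
    have h3 : Real.sqrt ((x.1 * y.1 + x.2 * y.2)^2) ≤ Real.sqrt ((x.1^2 + x.2^2) * (y.1^2 + y.2^2)) := by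
      apply Real.sqrt_le_sqrt; nlinarith [sq_nonneg (x.1 * y.2 - x.2 * y.1)]
    rw [Real.sqrt_mul (by positivity)] at h3
    linarith
  have h4 : Real.sqrt ((x.1 + y.1)^2 + (x.2 + y.2)^2) ≤ Real.sqrt ((Real.sqrt (x.1^2+x.2^2) + Real.sqrt (y.1^2+y.2^2))^2) := by
    apply Real.sqrt_le_sqrt
    have e1 : Real.sqrt (x.1^2+x.2^2) ^ 2 = x.1^2+x.2^2 := Real.sq_sqrt (by positivity)
    have e2 : Real.sqrt (y.1^2+y.2^2) ^ 2 = y.1^2+y.2^2 := Real.sq_sqrt (by positivity)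
    nlinarith
  rwa [Real.sqrt_sq (by positivity)] at h4

lemma omega2_bound (x y : ℝ × ℝ) : |omega2 x y| ≤ enorm2 x * enorm2 y := by
  simp only [omega2, enorm2]
  rw [← Real.sqrt_sq_eq_abs, ← Real.sqrt_mul (by positivity)]
  apply Real.sqrt_le_sqrt; nlinarith [sq_nonneg (x.1 * y.1 + x.2 * y.2)]

lemma max_sub_max_abs (a b c : ℝ) : |max a b - max a c| ≤ |b - c| := by
  rw [abs_sub_le_iff]
  constructor <;>
  · rw [sub_le_iff_le_add]
    apply max_le
    · have h1 := le_max_left a c; have h2 := le_max_left a b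
      have := abs_nonneg (b - c); linarith
    · have := le_abs_self (b - c); have := neg_abs_le (b - c)
      have := le_max_right a b; have := le_max_right a c
      linarith
section
variable {k g : ℝ → ℝ}
    (hk_mono : StrictMonoOn k (Set.Ici 0))
    (hk0 : k 0 = 0)
    (hk_nonneg : ∀ t ∈ Set.Ici (0:ℝ), 0 ≤ k t)
    (hg_left : ∀ s ∈ Set.Ici (0:ℝ), g (Ginv k s) = s)
    (hg_right : ∀ t ∈ Set.Ici (0:ℝ), 0 ≤ g t ∧ Ginv k (g t) = t)

include hk_mono in
lemma hG_strict : StrictMonoOn (Ginv k) (Set.Ici 0) := fun a ha b hb hab => by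
  simp only [Ginv]
  have := hk_mono ha hb hab
  have : a^2 < b^2 := by nlinarith [Set.mem_Ici.mp ha]
  have := hk_mono ha hb hab
  linarith

include hk0 in
lemma hG0 : Ginv k 0 = 0 := by simp [Ginv, hk0]

include hk_nonneg in
lemma hG_nonneg : ∀ s, 0 ≤ s → 0 ≤ Ginv k s := fun s hs => by
  have := hk_nonneg s hs; simp only [Ginv]; positivity

include hk_mono hg_right in
lemma g_mono : ∀ t₁ t₂, 0 ≤ t₁ → t₁ ≤ t₂ → g t₁ ≤ g t₂ := by
  intro t₁ t₂ h1 h12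
  by_contra hc
  push_neg at hc
  have h2 : (0:ℝ) ≤ t₂ := le_trans h1 h12
  have hr1 := hg_right t₁ h1
  have hr2 := hg_right t₂ h2
  have := hG_strict hk_mono hr2.1 (le_trans hr2.1 hc.le) hc
  rw [hr1.2, hr2.2] at this
  linarith

include hk_mono hk0 hk_nonneg hg_right in
lemma g0 : g 0 = 0 := by
  have h := hg_right 0 (Set.mem_Ici.mpr le_rfl)
  have h1 : k (g 0) + (g 0)^2 = 0 := h.2
  have h2 : 0 ≤ k (g 0) := hk_nonneg _ h.1
  nlinarith [h.1]

-- continuity of g on Ici 0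
include hk_mono hk0 hk_nonneg hg_left hg_right in
lemma g_cont : ContinuousOn g (Set.Ici 0) := by
  intro t₀ ht₀
  rw [Metric.continuousWithinAt_iff]
  intro τ hτ
  set r := g t₀ with hr
  have hr0 : 0 ≤ r := (hg_right t₀ ht₀).1
  have hGr : Ginv k r = t₀ := (hg_right t₀ ht₀).2
  rcases eq_or_lt_of_le hr0 with h0 | hpos
  · -- r = 0, so t₀ = 0
    have ht0 : t₀ = 0 := by rw [← hGr, ← h0, hG0 hk0]
    refine ⟨Ginv k (τ/2), ?_, ?_⟩
    · rw [← hG0 hk0]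
      exact hG_strict hk_mono Set.self_mem_Ici (Set.mem_Ici.mpr (by positivity)) (by positivity)
    · intro t ht hdist
      rw [Real.dist_eq] at hdist ⊢
      rw [ht0, sub_zero] at hdist
      rw [abs_of_nonneg ht] at hdist
      have h1 : g t ≤ τ/2 := by
        have := g_mono hk_mono hg_right t (Ginv k (τ/2)) ht hdist.le
        rwa [hg_left (τ/2) (Set.mem_Ici.mpr (by positivity))] at this
      have h2 : 0 ≤ g t := (hg_right t ht).1
      rw [← h0, sub_zero, abs_of_nonneg h2]
      linarith
  · -- r > 0
    set τ' := min (τ/2) r with hτ'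
    have hτ'pos : 0 < τ' := lt_min (by positivity) hpos
    have hτ'r : τ' ≤ r := min_le_right _ _
    have hlow : Ginv k (r - τ') < t₀ := by
      rw [← hGr]
      exact hG_strict hk_mono (Set.mem_Ici.mpr (by linarith)) (Set.mem_Ici.mpr hr0) (by linarith)
    have hhigh : t₀ < Ginv k (r + τ') := by
      rw [← hGr]
      exact hG_strict hk_mono (Set.mem_Ici.mpr hr0) (Set.mem_Ici.mpr (by linarith)) (by linarith)
    refine ⟨min (t₀ - Ginv k (r - τ')) (Ginv k (r + τ') - t₀), lt_min (by linarith) (by linarith), ?_⟩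
    intro t ht hdist
    rw [Real.dist_eq] at hdist ⊢
    have hd1 : t₀ - t ≤ |t - t₀| := by rw [abs_sub_comm]; exact le_abs_self _
    have hd2 : t - t₀ ≤ |t - t₀| := le_abs_self _
    have hmin1 := min_le_left (t₀ - Ginv k (r - τ')) (Ginv k (r + τ') - t₀)
    have hmin2 := min_le_right (t₀ - Ginv k (r - τ')) (Ginv k (r + τ') - t₀)
    have hlt : Ginv k (r - τ') < t := by linarith
    have hgt : t < Ginv k (r + τ') := by linarith
    have hgl : r - τ' ≤ g t := by
      have := g_mono hk_mono hg_right (Ginv k (r - τ')) t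
        (hG_nonneg hk_nonneg _ (by linarith)) hlt.le
      rwa [hg_left (r - τ') (by simp; linarith)] at this
    have hgu : g t ≤ r + τ' := by
      have := g_mono hk_mono hg_right t (Ginv k (r + τ')) ht hgt.le
      rwa [hg_left (r + τ') (by simp; linarith)] at this
    rw [abs_lt]
    have : τ' ≤ τ/2 := min_le_left _ _
    constructor <;> linarith
end
lemma bdil_comp (k g : ℝ → ℝ) (hg0 : g 0 = 0) (hk0 : k 0 = 0)
    (ε s : ℝ) (hε : 0 < ε) (hs : 0 ≤ s) :
    (bdil k g ε⁻¹ (Hmul (bdil k g ε ((s,0),0)) (bdil k g ε ((0,1),0)))).2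
      = Ginv k (ε⁻¹ * g (2*ε^2*s)) := by
  simp only [bdil, Hmul, omega2, Real.sign_zero, abs_zero, hg0, mul_zero, zero_mul]
  rcases eq_or_lt_of_le hs with h0 | hpos
  · subst h0
    simp [Real.sign_zero, hg0, Ginv, hk0]
  · have he : 0 + 0 + 2 * (ε * s * (ε * 1) - 0) = 2*ε^2*s := by ring
    rw [he]
    have hT : (0:ℝ) < 2*ε^2*s := by nlinarith [mul_pos (mul_pos hε hpos) hε]
    rw [Real.sign_of_pos hT, abs_of_pos hT, one_mul]

section Main
variable {k g : ℝ → ℝ}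
    (hk_mono : StrictMonoOn k (Set.Ici 0))
    (hk0 : k 0 = 0)
    (hk_nonneg : ∀ t ∈ Set.Ici (0:ℝ), 0 ≤ k t)
    (hg_left : ∀ s ∈ Set.Ici (0:ℝ), g (Ginv k s) = s)
    (hg_right : ∀ t ∈ Set.Ici (0:ℝ), 0 ≤ g t ∧ Ginv k (g t) = t)

include hk_mono hk0 hk_nonneg hg_left hg_right in
lemma key_lemma (β : H → H → H)
    (hβ : ∀ K : Set H, IsCompact K → ∀ η : ℝ, 0 < η →
      ∃ ε₀ : ℝ, 0 < ε₀ ∧ ∀ ε : ℝ, 0 < ε → ε < ε₀ → ∀ x ∈ K, ∀ y ∈ K,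
        ‖bdil k g ε⁻¹ (Hmul (bdil k g ε x) (bdil k g ε y)) - β x y‖ < η) :
    ∀ M : ℝ, 0 ≤ M → ∀ τ : ℝ, 0 < τ → ∃ ε₀ : ℝ, 0 < ε₀ ∧ ∀ ε, 0 < ε → ε < ε₀ →
      ∀ s, 0 ≤ s → s ≤ M →
        |ε⁻¹ * g (2*ε^2*s) - g (max ((β ((s,0),0) ((0,1),0)).2) 0)| < τ := by
  have hg0 : g 0 = 0 := g0 hk_mono hk0 hk_nonneg hg_right
  intro M hM τ hτ
  set C := Ginv k (Real.sqrt (2*M)) with hC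
  have hC0 : 0 ≤ C := hG_nonneg hk_nonneg _ (Real.sqrt_nonneg _)
  have hgu : UniformContinuousOn g (Set.Icc 0 (C+1)) :=
    (isCompact_Icc).uniformContinuousOn_of_continuous
      ((g_cont hk_mono hk0 hk_nonneg hg_left hg_right).mono Set.Icc_subset_Ici_self)
  rw [Metric.uniformContinuousOn_iff] at hgu
  obtain ⟨δ, hδ, hgu⟩ := hgu τ hτ
  set K' : Set H := ((fun s : ℝ => (((s,0),0) : H)) '' Set.Icc 0 M) ∪ {((0,1),0)} with hK'
  have hK'c : IsCompact K' := ((isCompact_Icc).image (by continuity)).union isCompact_singleton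
  obtain ⟨ε₀, hε₀, hconv⟩ := hβ K' hK'c (min δ 1) (lt_min hδ one_pos)
  refine ⟨ε₀, hε₀, ?_⟩
  intro ε hε hεε₀ s hs hsM
  have hxK : (((s,0),0) : H) ∈ K' := Or.inl ⟨s, ⟨hs, hsM⟩, rfl⟩
  have hyK : (((0,1),0) : H) ∈ K' := Or.inr rfl
  have hnorm := hconv ε hε hεε₀ _ hxK _ hyK
  have h3 : |Ginv k (ε⁻¹ * g (2*ε^2*s)) - (β ((s,0),0) ((0,1),0)).2| < min δ 1 := by
    have h := norm_snd_le (bdil k g ε⁻¹ (Hmul (bdil k g ε ((s,0),0)) (bdil k g ε ((0,1),0)))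
      - β ((s,0),0) ((0,1),0))
    rw [Prod.snd_sub, Real.norm_eq_abs, bdil_comp k g hg0 hk0 ε s hε hs] at h
    exact lt_of_le_of_lt h hnorm
  set q := ε⁻¹ * g (2*ε^2*s) with hq
  have harg : (0:ℝ) ≤ 2*ε^2*s := by positivity
  have hq0 : 0 ≤ q := mul_nonneg (inv_nonneg.mpr hε.le) (hg_right _ (Set.mem_Ici.mpr harg)).1
  have hqle : q ≤ Real.sqrt (2*s) := by
    have hG : 2*ε^2*s ≤ Ginv k (ε * Real.sqrt (2*s)) := by
      have hsq : (ε * Real.sqrt (2*s))^2 = ε^2 * (2*s) := by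
        rw [mul_pow, Real.sq_sqrt (by linarith)]
      have hkn := hk_nonneg (ε * Real.sqrt (2*s)) (Set.mem_Ici.mpr (by positivity))
      simp only [Ginv, hsq]
      nlinarith
    have := g_mono hk_mono hg_right (2*ε^2*s) (Ginv k (ε * Real.sqrt (2*s))) harg hG
    rw [hg_left (ε * Real.sqrt (2*s)) (Set.mem_Ici.mpr (by positivity))] at this
    calc q ≤ ε⁻¹ * (ε * Real.sqrt (2*s)) := by
          apply mul_le_mul_of_nonneg_left this (inv_nonneg.mpr hε.le)
      _ = Real.sqrt (2*s) := by field_simp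
  have hh0 : 0 ≤ Ginv k q := hG_nonneg hk_nonneg q hq0
  have hhC : Ginv k q ≤ C := by
    rw [hC]
    exact (hG_strict hk_mono).monotoneOn (Set.mem_Ici.mpr hq0)
      (Set.mem_Ici.mpr (Real.sqrt_nonneg _))
      (hqle.trans (Real.sqrt_le_sqrt (by linarith)))
  set b := max ((β ((s,0),0) ((0,1),0)).2) 0 with hb
  have hdb : |Ginv k q - b| ≤ |Ginv k q - (β ((s,0),0) ((0,1),0)).2| := by
    rcases le_or_gt 0 ((β ((s,0),0) ((0,1),0)).2) with hB | hB
    · rw [hb, max_eq_left hB]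
    · rw [hb, max_eq_right hB.le, sub_zero, abs_of_nonneg hh0]
      rw [abs_of_nonneg (by linarith)]
      linarith
  have hbmem : b ∈ Set.Icc 0 (C+1) := by
    constructor
    · exact le_max_right _ _
    · have h1 : (β ((s,0),0) ((0,1),0)).2 ≤ Ginv k q + 1 := by
        have := le_abs_self ((β ((s,0),0) ((0,1),0)).2 - Ginv k q)
        rw [abs_sub_comm] at this
        have h2 := lt_of_lt_of_le h3 (min_le_right δ 1)
        linarith [(abs_sub_abs_le_abs_sub _ _ : |(β ((s,0),0) ((0,1),0)).2| - |Ginv k q| ≤ _)]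
      exact max_le (by linarith) (by linarith)
  have hhmem : Ginv k q ∈ Set.Icc 0 (C+1) := ⟨hh0, by linarith⟩
  have hdd := hgu _ hhmem _ hbmem (by
    rw [Real.dist_eq]
    exact lt_of_le_of_lt hdb (lt_of_lt_of_le h3 (min_le_left δ 1)))
  rw [Real.dist_eq] at hdd
  rwa [hg_left q (Set.mem_Ici.mpr hq0)] at hdd



include hk_mono hk0 hk_nonneg hg_left hg_right in
theorem main_thm
    (hnotdiff : ∀ x : H, ¬ ∃ η : H → ℝ,
      (∀ ε : ℝ, 0 < ε → ∀ v : H, η (hdil ε v) = ε * η v) ∧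
      (∀ v w : H, η (Hmul v w) ≤ η v + η w) ∧
      (∀ K : Set H, IsCompact K → ∀ τ : ℝ, 0 < τ → ∃ ε₀ : ℝ, 0 < ε₀ ∧
        ∀ ε : ℝ, 0 < ε → ε < ε₀ → ∀ v ∈ K,
          |(1 / ε) * rho0 g (Hmul (Hinv x) (Hmul x (hdil ε v))) - η v| < τ)) :
    ¬ ∃ β : H → H → H, ∀ K : Set H, IsCompact K → ∀ η : ℝ, 0 < η →
      ∃ ε₀ : ℝ, 0 < ε₀ ∧ ∀ ε : ℝ, 0 < ε → ε < ε₀ → ∀ x ∈ K, ∀ y ∈ K,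
        ‖bdil k g ε⁻¹ (Hmul (bdil k g ε x) (bdil k g ε y)) - β x y‖ < η := by
  rintro ⟨β, hβ⟩
  have hg0 : g 0 = 0 := g0 hk_mono hk0 hk_nonneg hg_right
  set ψ : ℝ → ℝ := fun s => g (max ((β ((s,0),0) ((0,1),0)).2) 0) with hψdef
  have key := key_lemma hk_mono hk0 hk_nonneg hg_left hg_right β hβ
  -- pointwise convergence
  have ptw : ∀ s : ℝ, 0 ≤ s → Filter.Tendsto (fun ε => ε⁻¹ * g (2*ε^2*s))
      (nhdsWithin 0 (Set.Ioi 0)) (nhds (ψ s)) := by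
    intro s hs
    rw [Metric.tendsto_nhdsWithin_nhds]
    intro τ hτ
    obtain ⟨ε₀, hε₀, hk⟩ := key s hs τ hτ
    refine ⟨ε₀, hε₀, fun x hx hd => ?_⟩
    rw [Real.dist_eq, sub_zero, abs_of_pos hx] at hd
    rw [Real.dist_eq]
    exact hk x hx hd s hs le_rfl
  -- scaling
  have hscale : ∀ t s : ℝ, 0 < t → 0 ≤ s → ψ (t^2 * s) = t * ψ s := by
    intro t s ht hs
    have h1 := ptw (t^2*s) (by positivity)
    have h2 : Filter.Tendsto (fun ε : ℝ => ε * t) (nhdsWithin 0 (Set.Ioi 0))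
        (nhdsWithin 0 (Set.Ioi 0)) := by
      rw [tendsto_nhdsWithin_iff]
      constructor
      · have hcont : Filter.Tendsto (fun ε : ℝ => ε * t) (nhds 0) (nhds 0) := by
          simpa using (continuous_mul_right t).tendsto (0:ℝ)
        exact hcont.mono_left nhdsWithin_le_nhds
      · exact eventually_mem_nhdsWithin.mono (fun x hx => mul_pos hx ht)
    have h3 := ((ptw s hs).comp h2).const_mul t
    have h4 : ∀ ε ∈ Set.Ioi (0:ℝ),
        t * ((fun ε => ε⁻¹ * g (2*ε^2*s)) (ε * t)) = ε⁻¹ * g (2*ε^2*(t^2*s)) := by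
      intro ε hε
      have hε' : (0:ℝ) < ε := hε
      simp only
      rw [show 2*(ε*t)^2*s = 2*ε^2*(t^2*s) by ring]
      rw [mul_inv]
      field_simp
    have h5 : Filter.Tendsto (fun ε : ℝ => ε⁻¹ * g (2*ε^2*(t^2*s)))
        (nhdsWithin 0 (Set.Ioi 0)) (nhds (t * ψ s)) := by
      apply Filter.Tendsto.congr' _ h3
      filter_upwards [eventually_mem_nhdsWithin] with x hx
      exact h4 x hx
    exact (tendsto_nhds_unique h5 h1).symm
  set c := ψ 2⁻¹ with hcdef
  have hc0 : 0 ≤ c := (hg_right _ (Set.mem_Ici.mpr (le_max_right _ _))).1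
  have hc1 : c ≤ 1 := by
    refine le_of_tendsto (ptw 2⁻¹ (by norm_num)) ?_
    filter_upwards [eventually_mem_nhdsWithin] with ε hε
    have hε' : (0:ℝ) < ε := hε
    rw [show 2*ε^2*2⁻¹ = ε^2 by ring]
    have h1 : g (ε^2) ≤ ε := by
      have hle : ε^2 ≤ Ginv k ε := by
        have := hk_nonneg ε (Set.mem_Ici.mpr hε'.le)
        simp only [Ginv]; linarith
      have := g_mono hk_mono hg_right (ε^2) (Ginv k ε) (sq_nonneg ε) hle
      rwa [hg_left ε (Set.mem_Ici.mpr hε'.le)] at this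
    calc ε⁻¹ * g (ε^2) ≤ ε⁻¹ * ε := by
          exact mul_le_mul_of_nonneg_left h1 (inv_nonneg.mpr hε'.le)
      _ = 1 := inv_mul_cancel₀ hε'.ne'
  have hψ0 : ψ 0 = 0 := by
    have h1 := ptw 0 le_rfl
    have h2 : Filter.Tendsto (fun ε : ℝ => ε⁻¹ * g (2*ε^2*0))
        (nhdsWithin 0 (Set.Ioi 0)) (nhds 0) := by
      have heq : (fun ε : ℝ => ε⁻¹ * g (2*ε^2*0)) = fun _ => (0:ℝ) := by
        funext ε; simp [hg0]
      rw [heq]; exact tendsto_const_nhds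
    exact tendsto_nhds_unique h1 h2
  have hψhalf : ∀ t : ℝ, 0 ≤ t → ψ (t/2) = c * Real.sqrt t := by
    intro t ht
    rcases eq_or_lt_of_le ht with h0 | hpos
    · rw [← h0]; norm_num [hψ0]
    · have h1 : ψ ((Real.sqrt t)^2 * 2⁻¹) = Real.sqrt t * c :=
        hscale (Real.sqrt t) 2⁻¹ (Real.sqrt_pos.mpr hpos) (by norm_num)
      rw [Real.sq_sqrt ht] at h1
      rw [show t/2 = t * 2⁻¹ by ring, h1, mul_comm]
  -- build η and contradict hnotdiff
  apply hnotdiff He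
  refine ⟨fun v => max (enorm2 v.1) (c * Real.sqrt |v.2|), ?_, ?_, ?_⟩
  · -- homogeneity
    intro ε hε v
    simp only [hdil]
    rw [enorm2_smul ε _ _ hε.le,
      show |ε^2 * v.2| = ε^2 * |v.2| by rw [abs_mul, abs_of_nonneg (sq_nonneg ε)],
      Real.sqrt_mul (sq_nonneg ε), Real.sqrt_sq hε.le,
      mul_max_of_nonneg _ _ hε.le, mul_left_comm c ε]
  · -- subadditivity
    intro v w
    simp only [Hmul]
    set A := max (enorm2 v.1) (c * Real.sqrt |v.2|) with hA
    set Bb := max (enorm2 w.1) (c * Real.sqrt |w.2|) with hBb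
    have hA0 : 0 ≤ A := le_trans (enorm2_nonneg _) (le_max_left _ _)
    have hBb0 : 0 ≤ Bb := le_trans (enorm2_nonneg _) (le_max_left _ _)
    apply max_le
    · calc enorm2 ((v.1.1 + w.1.1, v.1.2 + w.1.2) : ℝ × ℝ)
          ≤ enorm2 v.1 + enorm2 w.1 := enorm2_triangle v.1 w.1
        _ ≤ A + Bb := add_le_add (le_max_left _ _) (le_max_left _ _)
    · have hT : |v.2 + w.2 + 2 * omega2 v.1 w.1|
          ≤ |v.2| + |w.2| + 2 * (enorm2 v.1 * enorm2 w.1) := by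
        have h1 := omega2_bound v.1 w.1
        calc |v.2 + w.2 + 2 * omega2 v.1 w.1|
            ≤ |v.2 + w.2| + |2 * omega2 v.1 w.1| := abs_add_le _ _
          _ ≤ |v.2| + |w.2| + 2 * |omega2 v.1 w.1| := by
              rw [abs_mul, abs_of_nonneg (by norm_num : (0:ℝ) ≤ 2)]
              have := abs_add_le v.2 w.2
              linarith
          _ ≤ _ := by linarith
      have hkey2 : c^2 * |v.2 + w.2 + 2 * omega2 v.1 w.1| ≤ (A + Bb)^2 := by
        have hca : c * Real.sqrt |v.2| ≤ A := le_max_right _ _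
        have hcb : c * Real.sqrt |w.2| ≤ Bb := le_max_right _ _
        have hea : enorm2 v.1 ≤ A := le_max_left _ _
        have heb : enorm2 w.1 ≤ Bb := le_max_left _ _
        have hsa : (Real.sqrt |v.2|)^2 = |v.2| := Real.sq_sqrt (abs_nonneg _)
        have hsb : (Real.sqrt |w.2|)^2 = |w.2| := Real.sq_sqrt (abs_nonneg _)
        have he1 : 0 ≤ enorm2 v.1 := enorm2_nonneg _
        have he2 : 0 ≤ enorm2 w.1 := enorm2_nonneg _
        have hs1 : 0 ≤ Real.sqrt |v.2| := Real.sqrt_nonneg _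
        have hs2 : 0 ≤ Real.sqrt |w.2| := Real.sqrt_nonneg _
        have hc2 : c^2 ≤ 1 := by nlinarith
        have hT2 : c^2 * |v.2 + w.2 + 2 * omega2 v.1 w.1|
            ≤ c^2 * (|v.2| + |w.2| + 2 * (enorm2 v.1 * enorm2 w.1)) :=
          mul_le_mul_of_nonneg_left hT (sq_nonneg c)
        have hv2 : c^2 * |v.2| = (c * Real.sqrt |v.2|)^2 := by rw [mul_pow, hsa]
        have hw2 : c^2 * |w.2| = (c * Real.sqrt |w.2|)^2 := by rw [mul_pow, hsb]
        have hA2 : (c * Real.sqrt |v.2|)^2 ≤ A^2 :=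
          pow_le_pow_left₀ (mul_nonneg hc0 hs1) hca 2
        have hB2 : (c * Real.sqrt |w.2|)^2 ≤ Bb^2 :=
          pow_le_pow_left₀ (mul_nonneg hc0 hs2) hcb 2
        have hAB : enorm2 v.1 * enorm2 w.1 ≤ A * Bb := mul_le_mul hea heb he2 hA0
        have hee : 0 ≤ enorm2 v.1 * enorm2 w.1 := mul_nonneg he1 he2
        nlinarith [mul_nonneg hA0 hBb0]
      have heq : c * Real.sqrt |v.2 + w.2 + 2 * omega2 v.1 w.1|
          = Real.sqrt (c^2 * |v.2 + w.2 + 2 * omega2 v.1 w.1|) := by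
        rw [Real.sqrt_mul (sq_nonneg c), Real.sqrt_sq hc0]
      rw [heq]
      calc Real.sqrt (c^2 * |v.2 + w.2 + 2 * omega2 v.1 w.1|)
          ≤ Real.sqrt ((A + Bb)^2) := Real.sqrt_le_sqrt hkey2
        _ = A + Bb := Real.sqrt_sq (by linarith)
  · -- uniform convergence
    intro K hK τ hτ
    obtain ⟨R, hR⟩ := hK.isBounded.subset_closedBall 0
    set M := max R 0 with hM
    obtain ⟨ε₀, hε₀, hkeyM⟩ := key M (le_max_right _ _) τ hτ
    refine ⟨ε₀, hε₀, ?_⟩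
    intro ε hε hεε₀ v hv
    rw [hgroup]
    have ht : |v.2| ≤ M := by
      have h1 := hR hv
      rw [Metric.mem_closedBall, dist_zero_right] at h1
      have h2 := norm_snd_le v
      rw [Real.norm_eq_abs] at h2
      exact le_trans (h2.trans h1) (le_max_left _ _)
    have e1 : rho0 g (hdil ε v) = max (ε * enorm2 v.1) (g (ε^2 * |v.2|)) := by
      simp only [rho0, hdil]
      rw [enorm2_smul ε _ _ hε.le, abs_mul, abs_of_nonneg (sq_nonneg ε)]
    show |(1/ε) * rho0 g (hdil ε v)
        - max (enorm2 v.1) (c * Real.sqrt |v.2|)| < τ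
    rw [e1]
    have e2 : (1/ε) * max (ε * enorm2 v.1) (g (ε^2 * |v.2|))
        = max (enorm2 v.1) (ε⁻¹ * g (2*ε^2*(|v.2|/2))) := by
      rw [mul_max_of_nonneg _ _ (by positivity : (0:ℝ) ≤ 1/ε)]
      rw [show 2*ε^2*(|v.2|/2) = ε^2*|v.2| by ring, one_div]
      congr 1
      field_simp
    rw [e2]
    have e3 : c * Real.sqrt |v.2| = ψ (|v.2|/2) := (hψhalf |v.2| (abs_nonneg _)).symm
    have hfinal := max_sub_max_abs (enorm2 v.1) (ε⁻¹ * g (2*ε^2*(|v.2|/2)))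
      (c * Real.sqrt |v.2|)
    have h6 := hkeyM ε hε hεε₀ (|v.2|/2) (by positivity)
      (by have hM0 : (0:ℝ) ≤ M := le_max_right _ _; linarith)
    have h6' : |ε⁻¹ * g (2*ε^2*(|v.2|/2)) - ψ (|v.2|/2)| < τ := h6
    rw [← e3] at h6'
    exact lt_of_le_of_lt hfinal h6'
end Main

/-- if id : (H(1),d) → (H(1),ρ) is not metrically differentiable
at any point, then (H(1),ρ,δ̄) is not a dilatation structure: axiom A4 fails. -/
theorem not_dilatation_structure
(k g : ℝ → ℝ)
    (hk_conv : ConvexOn ℝ (Set.Ici 0) k)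
    (hk_mono : StrictMonoOn k (Set.Ici 0))
    (hk_cont : ContinuousOn k (Set.Ici 0))
    (hk0 : k 0 = 0)
    (hk_nonneg : ∀ t ∈ Set.Ici (0:ℝ), 0 ≤ k t)
    (hg_left : ∀ s ∈ Set.Ici (0:ℝ), g (Ginv k s) = s)
    (hg_right : ∀ t ∈ Set.Ici (0:ℝ), 0 ≤ g t ∧ Ginv k (g t) = t)
    (hnotdiff : ∀ x : H, ¬ ∃ η : H → ℝ,
      (∀ ε : ℝ, 0 < ε → ∀ v : H, η (hdil ε v) = ε * η v) ∧
      (∀ v w : H, η (Hmul v w) ≤ η v + η w) ∧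
      (∀ K : Set H, IsCompact K → ∀ τ : ℝ, 0 < τ → ∃ ε₀ : ℝ, 0 < ε₀ ∧
        ∀ ε : ℝ, 0 < ε → ε < ε₀ → ∀ v ∈ K,
          |(1 / ε) * rho0 g (Hmul (Hinv x) (Hmul x (hdil ε v))) - η v| < τ)) :
    ¬ ∃ β : H → H → H, ∀ K : Set H, IsCompact K → ∀ η : ℝ, 0 < η →
      ∃ ε₀ : ℝ, 0 < ε₀ ∧ ∀ ε : ℝ, 0 < ε → ε < ε₀ → ∀ x ∈ K, ∀ y ∈ K,
        ‖bdil k g ε⁻¹ (Hmul (bdil k g ε x) (bdil k g ε y)) - β x y‖ < η := by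
  exact main_thm hk_mono hk0 hk_nonneg hg_left hg_right hnotdiff
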